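/- arXiv:2201.11833 — 4 statements merged into one kernel-verified Lean document; each statement's English description precedes it below -/
import Mathlib

section
/- Let K = ⟨a,b⟩ be the Klein four-group, P the standard free resolution of ℤ as above, M a K-module, n > 0 odd, and v ∈ M_{−+} (i.e. av = −v, bv = v). Then the map ξ_v : Pₙ → M defined by ξ_v(xⁿ) = v and ξ_v(x^m y^{n−m}) = 0 for m < n is an n-cocycle. -/
/-- The Klein four-group `K = ⟨a, b | a² = b² = 1, ab = ba⟩`. -/
abbrev KleinK : Type := Multiplicative (ZMod 2 × ZMod 2)

/-- The generator `a` of the Klein four-group. -/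
def kleinA : KleinK := Multiplicative.ofAdd (1, 0)

/-- The generator `b` of the Klein four-group. -/
def kleinB : KleinK := Multiplicative.ofAdd (0, 1)

/-- The integral group ring `ℤK` of the Klein four-group. -/
abbrev KleinRing : Type := MonoidAlgebra ℤ KleinK

/-- The differential `d : Pₙ → P_{n−1}` of the standard free resolution of `ℤ` over `ℤK`:
`Pₙ` is free on `x^k y^{n−k}` (coordinates indexed by `k : Fin (n+1)`) and
`d(x^k y^l) = (a+(−1)^k)·x^{k−1}y^l + (−1)^k(b+(−1)^l)·x^k y^{l−1}`. -/
def kleinDiff {R : Type*} [CommRing R] (a b : R) (n : ℕ) (c : Fin (n + 1) → R) :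
    Fin n → R :=
  fun j => (a + (-1 : R) ^ ((j : ℕ) + 1)) * c j.succ +
    (-1 : R) ^ (j : ℕ) * (b + (-1 : R) ^ (n - (j : ℕ))) * c j.castSucc

/-- For a `K`-module `M`, odd `n > 0` and `v ∈ M_{−+}` (i.e. `av = −v`, `bv = v`), the `ℤK`-linear map
`ξ_v : Pₙ → M` with `ξ_v(xⁿ) = v` and `ξ_v(x^m y^{n−m}) = 0` for `m < n` is an
`n`-cocycle: `ξ_v ∘ d = 0` as a map `P_{n+1} → M`.  (The value of `ξ_v` on the element of
`Pₙ` with coordinates `c` is `c n • v`.) -/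
theorem xi_v_is_cocycle_odd
    (M : Type*) [AddCommGroup M] [Module KleinRing M]
    (n : ℕ) (hn : 0 < n) (hodd : Odd n) (v : M)
    (hav : (MonoidAlgebra.of ℤ KleinK kleinA) • v = -v)
    (hbv : (MonoidAlgebra.of ℤ KleinK kleinB) • v = v)
    (c : Fin (n + 2) → KleinRing) :
    (kleinDiff (MonoidAlgebra.of ℤ KleinK kleinA) (MonoidAlgebra.of ℤ KleinK kleinB)
        (n + 1) c) (Fin.last n) • v = 0 := by
  set A := MonoidAlgebra.of ℤ KleinK kleinA
  set B := MonoidAlgebra.of ℤ KleinK kleinB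
  have hA : (A + 1) • v = 0 := by rw [add_smul, one_smul, hav, neg_add_cancel]
  have hB : (B + (-1 : KleinRing)) • v = 0 := by
    rw [add_smul, hbv, neg_smul, one_smul, add_neg_cancel]
  simp only [kleinDiff, Fin.val_last]
  rw [Even.neg_one_pow (by simpa using hodd.add_one), Odd.neg_one_pow hodd,
    (show n + 1 - n = 1 by omega), pow_one, add_smul]
  rw [mul_comm, mul_smul, hA, smul_zero]
  rw [show (-1 * (B + -1) * c (Fin.last n).castSucc) = (-1 * c (Fin.last n).castSucc) * (B + -1) by ring,
    mul_smul, hB, smul_zero, zero_add]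
end

section
/- Let K = ⟨a,b⟩ be the Klein four-group and let M ⊆ ℤ² be the K-lattice {(z, z′) ∈ ℤ² : z ≡ z′ (mod 2)}, where a acts by a·(z,z′) = (z, −z′) and b acts by b·(z,z′) = (z, −z′) (i.e. M embeds in ℤ_{++} ⊕ ℤ_{−−}). Let n > 0 be even and v = (2, 0). Then the cocycle ξ_v (defined by ξ_v(xⁿ) = v, ξ_v(x^m y^{n−m}) = 0 for m < n, with respect to the standard resolution P) is not a coboundary; that is, there is no ℤK-linear map γ : P_{n−1} → M with ξ_v = γ ∘ d. -/
/-- The common action of the generators `a` and `b` of the Klein four-group on the lattice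
`M ⊆ ℤ_{++} ⊕ ℤ_{−−}`: `(z, z′) ↦ (z, −z′)`. -/
def kleinAct (w : ℤ × ℤ) : ℤ × ℤ := (w.1, -w.2)

/-- Let `M = {(z,z′) ∈ ℤ² : z ≡ z′ (mod 2)}` with both `a` and `b` acting by
`(z,z′) ↦ (z,−z′)`, let `n > 0` be even and `v = (2,0)`.  Then the cocycle `ξ_v`
(given on the standard resolution `P` by `ξ_v(xⁿ) = v`, `ξ_v(x^m y^{n−m}) = 0` for `m < n`)
is not a coboundary: there is no `ℤK`-linear `γ : P_{n−1} → M` with `ξ_v = γ ∘ d`.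
Such a `γ` is encoded by its values `g k ∈ M` on the basis elements `x^k y^{n−1−k}`
(`k < n`, padded by `0` for `k ≥ n`), and `ξ_v = γ ∘ d` is the displayed equation, obtained
by evaluating both sides on the basis element `x^k y^{n−k}` of `Pₙ` using
`d(x^k y^l) = (a+(−1)^k)x^{k−1}y^l + (−1)^k(b+(−1)^l)x^k y^{l−1}`. -/
theorem xi_v_not_coboundary (n : ℕ) (hn : 0 < n) (hev : Even n) :
    ¬ ∃ g : ℕ → ℤ × ℤ,
      (∀ j, (g j).1 ≡ (g j).2 [ZMOD 2]) ∧
      (∀ j, n ≤ j → g j = 0) ∧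
      (∀ k, k ≤ n →
        (if 0 < k then kleinAct (g (k - 1)) + ((-1 : ℤ) ^ k) • g (k - 1) else 0) +
        (if k < n then
            ((-1 : ℤ) ^ k) • (kleinAct (g k) + ((-1 : ℤ) ^ (n - k)) • g k) else 0)
        = (if k = n then ((2, 0) : ℤ × ℤ) else 0)) := by
  rintro ⟨g, hcong, hzero, heq⟩
  have hn1 : ((-1 : ℤ)) ^ n = 1 := hev.neg_one_pow
  -- k = 0 gives (g 0).1 = 0
  have h0 : (g 0).1 = 0 := by
    have E := heq 0 (Nat.zero_le n)
    rw [if_neg (lt_irrefl 0), if_pos hn, if_neg hn.ne] at E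
    simp only [Nat.sub_zero, pow_zero, hn1, one_smul, zero_add] at E
    have h1 := congrArg Prod.fst E
    simp only [kleinAct, Prod.fst_add, Prod.fst_zero] at h1
    omega
  -- k = n gives (g (n-1)).1 = 1
  have hlast : (g (n - 1)).1 = 1 := by
    have E := heq n le_rfl
    rw [if_pos hn, if_neg (lt_irrefl n), if_pos rfl, hn1, one_smul] at E
    have h1 := congrArg Prod.fst E
    simp only [kleinAct, Prod.fst_add] at h1
    norm_num at h1
    omega
  -- parity propagation
  have key : ∀ j, j < n → (g j).1 % 2 = 0 := by
    intro j
    induction j with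
    | zero => intro _; simp [h0]
    | succ j ih =>
      intro hj
      have hjn : j < n := by omega
      have E := heq (j + 1) (le_of_lt hj)
      have hne : j + 1 ≠ n := Nat.ne_of_lt hj
      rw [if_pos (Nat.succ_pos j), if_pos hj, if_neg hne] at E
      simp only [Nat.add_sub_cancel] at E
      rcases Nat.even_or_odd (j + 1) with he | ho
      · have p1 : ((-1 : ℤ)) ^ (j + 1) = 1 := he.neg_one_pow
        have p2 : ((-1 : ℤ)) ^ (n - (j + 1)) = 1 := by
          refine Even.neg_one_pow ?_
          rcases hev with ⟨m, hm⟩; rcases he with ⟨m', hm'⟩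
          exact ⟨m - m', by omega⟩
        rw [p1, p2, one_smul, one_smul, one_smul] at E
        have h1 := congrArg Prod.fst E
        simp only [kleinAct, Prod.fst_add, Prod.fst_zero] at h1
        have := ih hjn
        omega
      · have p1 : ((-1 : ℤ)) ^ (j + 1) = -1 := ho.neg_one_pow
        have p2 : ((-1 : ℤ)) ^ (n - (j + 1)) = -1 := by
          refine Odd.neg_one_pow ?_
          rcases hev with ⟨m, hm⟩; rcases ho with ⟨m', hm'⟩
          exact ⟨m - m' - 1, by omega⟩
        rw [p1, p2, neg_one_smul, neg_one_smul, neg_one_smul] at E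
        have h2 := congrArg Prod.snd E
        simp only [kleinAct, Prod.snd_add, Prod.snd_neg, Prod.snd_zero, neg_add_rev,
          neg_neg] at h2
        have c1 := hcong j
        have c2 := hcong (j + 1)
        simp only [Int.ModEq] at c1 c2
        have := ih hjn
        omega
  have := key (n - 1) (by omega)
  omega
end

section
/- Over 𝕜 = ℤ/2ℤ, the endomorphism algebra of the 5-subspace quiver representation V with V_• = 𝕜^{2m}, sink spaces 𝕜^m, and structure maps (I 0), (0 I), (I I), (I F) — where F and I − F are invertible — is isomorphic to the centralizer algebra {g ∈ Mat(m,𝕜) : gF = Fg}, via the map sending g in the centralizer to the endomorphism with component diag(g, g) on V_• and g on each sink. -/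
open Matrix

/-- Over `𝕜 = ℤ/2ℤ`, the endomorphism algebra of the 5-subspace representation with
`V_• = 𝕜^{2m}`, sinks `𝕜^m` and structure maps `(I 0), (0 I), (I I), (I F)` (with `F` and
`I − F` invertible) is isomorphic to the centralizer `{g : gF = Fg}` of `F` in `Mat(m,𝕜)`,
via `g ↦ (diag(g,g); g, g, g, g)`: every centralizer element gives an endomorphism, and
every endomorphism arises from a unique centralizer element. -/
theorem tube_representation_endomorphisms
    (m : ℕ) (F : Matrix (Fin m) (Fin m) (ZMod 2))
    (hF : IsUnit F) (hF1 : IsUnit (1 - F)) :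
    letI 𝕜 := ZMod 2
    letI Vm := Fin m → 𝕜
    letI V := Vm × Vm
    letI f1 : V →ₗ[𝕜] Vm := LinearMap.fst 𝕜 Vm Vm
    letI f2 : V →ₗ[𝕜] Vm := LinearMap.snd 𝕜 Vm Vm
    letI f3 : V →ₗ[𝕜] Vm := f1 + f2
    letI f4 : V →ₗ[𝕜] Vm := f1 + F.mulVecLin.comp f2
    (∀ g : Matrix (Fin m) (Fin m) (ZMod 2), g * F = F * g →
      (g.mulVecLin.comp f1 = f1.comp ((g.mulVecLin).prodMap (g.mulVecLin)) ∧
       g.mulVecLin.comp f2 = f2.comp ((g.mulVecLin).prodMap (g.mulVecLin)) ∧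
       g.mulVecLin.comp f3 = f3.comp ((g.mulVecLin).prodMap (g.mulVecLin)) ∧
       g.mulVecLin.comp f4 = f4.comp ((g.mulVecLin).prodMap (g.mulVecLin)))) ∧
    (∀ (φ₀ : V →ₗ[𝕜] V) (φ1 φ2 φ3 φ4 : Vm →ₗ[𝕜] Vm),
      φ1.comp f1 = f1.comp φ₀ → φ2.comp f2 = f2.comp φ₀ →
      φ3.comp f3 = f3.comp φ₀ → φ4.comp f4 = f4.comp φ₀ →
      ∃! g : Matrix (Fin m) (Fin m) (ZMod 2), g * F = F * g ∧
        φ₀ = (g.mulVecLin).prodMap (g.mulVecLin) ∧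
        φ1 = g.mulVecLin ∧ φ2 = g.mulVecLin ∧ φ3 = g.mulVecLin ∧ φ4 = g.mulVecLin) := by

  constructor
  · intro g hg
    refine ⟨?_, ?_, ?_, ?_⟩ <;>
      · apply LinearMap.ext
        rintro ⟨x, y⟩
        simp [Matrix.mulVec_add, Matrix.mulVec_mulVec, hg]
  · intro φ₀ φ1 φ2 φ3 φ4 h1 h2 h3 h4
    have e1 : ∀ x y : Fin m → ZMod 2, φ1 x = (φ₀ (x, y)).1 := fun x y =>
      congrFun (congrArg DFunLike.coe h1) (x, y)
    have e2 : ∀ x y : Fin m → ZMod 2, φ2 y = (φ₀ (x, y)).2 := fun x y =>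
      congrFun (congrArg DFunLike.coe h2) (x, y)
    have e3 : ∀ x y : Fin m → ZMod 2, φ3 (x + y) = (φ₀ (x, y)).1 + (φ₀ (x, y)).2 :=
      fun x y => congrFun (congrArg DFunLike.coe h3) (x, y)
    have e4 : ∀ x y : Fin m → ZMod 2,
        φ4 (x + F.mulVec y) = (φ₀ (x, y)).1 + F.mulVec (φ₀ (x, y)).2 :=
      fun x y => congrFun (congrArg DFunLike.coe h4) (x, y)
    -- φ3 = φ1
    have h31 : ∀ x, φ3 x = φ1 x := by
      intro x
      have := e3 x 0
      simpa [← e1 x 0, ← e2 x 0] using this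
    have h32 : ∀ y, φ3 y = φ2 y := by
      intro y
      have := e3 0 y
      simpa [← e1 0 y, ← e2 0 y] using this
    have h21 : ∀ x, φ2 x = φ1 x := fun x => (h32 x).symm.trans (h31 x)
    have h41 : ∀ x, φ4 x = φ1 x := by
      intro x
      have := e4 x 0
      simpa [← e1 x 0, ← e2 x 0] using this
    have hcomm : ∀ y, φ1 (F.mulVec y) = F.mulVec (φ1 y) := by
      intro y
      have := e4 0 y
      rw [← e1 0 y, ← e2 0 y] at this
      simpa [h41, h21] using this
    set g : Matrix (Fin m) (Fin m) (ZMod 2) := LinearMap.toMatrix' φ1 with hgdef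
    have hg1 : g.mulVecLin = φ1 := Matrix.toLin'_toMatrix' φ1
    have hgF : g * F = F * g := by
      apply Matrix.toLin'.injective
      rw [Matrix.toLin'_apply', Matrix.toLin'_apply', Matrix.mulVecLin_mul,
        Matrix.mulVecLin_mul, hg1]
      apply LinearMap.ext
      intro y
      simpa using hcomm y
    refine ⟨g, ⟨hgF, ?_, hg1.symm, ?_, ?_, ?_⟩, ?_⟩
    · apply LinearMap.ext
      rintro ⟨x, y⟩
      have := e1 x y
      have := e2 x y
      ext <;> simp [hg1, ← e1 x y, ← e2 x y, h21]
    · ext x; simp [hg1, h21]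
    · ext x; simp [hg1, h31]
    · ext x; simp [hg1, h41]
    · rintro g' ⟨-, -, hφ1, -⟩
      rw [hgdef, hφ1]
      exact (LinearMap.toMatrix'_toLin' g').symm
end

section
/- Let f be a monic polynomial of degree d over a field 𝕜 with f(0) ≠ 0 and f(1) ≠ 0. Define f^{(2)}(t) = f(1)^{−1} (t−1)^d f(t/(t−1)). Then f^{(2)} is a monic polynomial of degree d with f^{(2)}(0) ≠ 0 and f^{(2)}(1) ≠ 0, and (f^{(2)})^{(2)} = f. -/
/-!
Write `N f = ∑ aᵢ Xⁱ (X - 1)^(d - i)`, so that `trans2 f = f(1)⁻¹ • N f`. Each summand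
`Xⁱ (X - 1)^(d - i)` is monic of degree `d`, so the coefficient of `X^d` in `N f` is `∑ aᵢ = f(1)`;
at `X = 1` only the term `i = d` survives and at `X = 0` only `i = 0`. For the involution, evaluate
in the rational function field `𝕜(X)`: there `N f = (X - 1)^d f(X/(X - 1))`, and the Möbius map
`z ↦ z/(z - 1)` is an involution with `z/(z - 1) - 1 = (z - 1)⁻¹`, so the powers of `X - 1` cancel.
-/

open Polynomial

/-- The transformation `f ↦ f^{(2)}`, `f^{(2)}(t) = f(1)⁻¹ (t−1)^d f(t/(t−1))`, interpreted
as `f(1)⁻¹ ∑ aᵢ tⁱ (t−1)^{d−i}` where `f = ∑ aᵢ tⁱ` and `d = deg f`. -/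
noncomputable def trans2 {𝕜 : Type*} [Field 𝕜] (f : Polynomial 𝕜) : Polynomial 𝕜 :=
  (f.eval 1)⁻¹ • (Finset.range (f.natDegree + 1)).sum
    (fun i => C (f.coeff i) * X ^ i * (X - 1) ^ (f.natDegree - i))

section Numerator

variable {R : Type*} [CommRing R]

noncomputable def trans2Numerator (f : R[X]) : R[X] :=
  ∑ i ∈ Finset.range (f.natDegree + 1), C (f.coeff i) * X ^ i * (X - 1) ^ (f.natDegree - i)

theorem natDegree_trans2Numerator_le (f : R[X]) :
    (trans2Numerator f).natDegree ≤ f.natDegree := by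
  refine natDegree_sum_le_of_forall_le _ _ fun i hi => ?_
  have hi : i ≤ f.natDegree := Finset.mem_range_succ_iff.1 hi
  calc (C (f.coeff i) * X ^ i * (X - 1) ^ (f.natDegree - i)).natDegree
      ≤ i + (f.natDegree - i) := by compute_degree
    _ = f.natDegree := by omega

theorem coeff_X_pow_mul_X_sub_one_pow (i k : ℕ) :
    (X ^ i * (X - 1) ^ k : R[X]).coeff (i + k) = 1 := by
  nontriviality R
  have h := (isMonicOfDegree_X_pow (R := R) i).mul ((isMonicOfDegree_X_sub_one (1 : R)).pow k)
  rw [C_1, one_mul] at h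
  rw [← h.natDegree_eq]
  exact h.monic.coeff_natDegree

theorem coeff_trans2Numerator_natDegree (f : R[X]) :
    (trans2Numerator f).coeff f.natDegree = f.eval 1 := by
  rw [trans2Numerator, finsetSum_coeff, eval_eq_sum_range]
  refine Finset.sum_congr rfl fun i hi => ?_
  have hi : i ≤ f.natDegree := Finset.mem_range_succ_iff.1 hi
  rw [mul_assoc, coeff_C_mul, ← Nat.add_sub_of_le hi, Nat.add_sub_cancel_left,
    coeff_X_pow_mul_X_sub_one_pow, one_pow, mul_one]

theorem eval_one_trans2Numerator (f : R[X]) :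
    (trans2Numerator f).eval 1 = f.leadingCoeff := by
  rw [trans2Numerator, eval_finsetSum, Finset.sum_eq_single_of_mem f.natDegree (by simp)]
  · simp
  · intro i hi hne
    have : f.natDegree - i ≠ 0 := by have := Finset.mem_range.1 hi; omega
    simp [zero_pow this]

theorem eval_zero_trans2Numerator (f : R[X]) :
    (trans2Numerator f).eval 0 = (-1) ^ f.natDegree * f.eval 0 := by
  rw [trans2Numerator, eval_finsetSum, Finset.sum_eq_single_of_mem 0 (by simp)]
  · simp [coeff_zero_eq_eval_zero, mul_comm]
  · intro i _ hne
    simp [zero_pow hne]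

theorem aeval_trans2Numerator {K : Type*} [Field K] [Algebra R K] (f : R[X]) {z : K}
    (hz : z - 1 ≠ 0) :
    aeval z (trans2Numerator f) = (z - 1) ^ f.natDegree * aeval (z / (z - 1)) f := by
  rw [aeval_eq_sum_range (p := f), Finset.mul_sum, trans2Numerator, map_sum]
  refine Finset.sum_congr rfl fun i hi => ?_
  have hi : i ≤ f.natDegree := Finset.mem_range_succ_iff.1 hi
  rw [← pow_sub_mul_pow _ hi]
  simp only [map_mul, map_pow, aeval_C, aeval_X, map_sub, map_one, Algebra.smul_def, div_pow]
  field_simp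

end Numerator

section Mobius

variable {K : Type*} [Field K] {z : K}

theorem div_sub_one_sub_one (hz : z - 1 ≠ 0) : z / (z - 1) - 1 = (z - 1)⁻¹ := by
  rw [div_sub_one hz, sub_sub_cancel, one_div]

theorem div_sub_one_div_div_sub_one_sub_one (hz : z - 1 ≠ 0) :
    z / (z - 1) / (z / (z - 1) - 1) = z := by
  rw [div_sub_one_sub_one hz, div_inv_eq_mul, div_mul_cancel₀ _ hz]

end Mobius

section Trans2

variable {𝕜 : Type*} [Field 𝕜] {f : 𝕜[X]}

theorem trans2_eq_smul (f : 𝕜[X]) : trans2 f = (f.eval 1)⁻¹ • trans2Numerator f := rfl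

theorem isMonicOfDegree_trans2 (h1 : f.eval 1 ≠ 0) : IsMonicOfDegree (trans2 f) f.natDegree := by
  rw [isMonicOfDegree_iff, trans2_eq_smul, coeff_smul, coeff_trans2Numerator_natDegree,
    smul_eq_mul, inv_mul_cancel₀ h1]
  exact ⟨(natDegree_smul_le _ _).trans (natDegree_trans2Numerator_le f), rfl⟩

theorem eval_one_trans2 (f : 𝕜[X]) : (trans2 f).eval 1 = (f.eval 1)⁻¹ * f.leadingCoeff := by
  rw [trans2_eq_smul, eval_smul, eval_one_trans2Numerator, smul_eq_mul]

theorem eval_zero_trans2 (f : 𝕜[X]) :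
    (trans2 f).eval 0 = (f.eval 1)⁻¹ * ((-1) ^ f.natDegree * f.eval 0) := by
  rw [trans2_eq_smul, eval_smul, eval_zero_trans2Numerator, smul_eq_mul]

theorem aeval_trans2 {K : Type*} [Field K] [Algebra 𝕜 K] (f : 𝕜[X]) {z : K} (hz : z - 1 ≠ 0) :
    aeval z (trans2 f) =
      algebraMap 𝕜 K (f.eval 1)⁻¹ * ((z - 1) ^ f.natDegree * aeval (z / (z - 1)) f) := by
  rw [trans2_eq_smul, map_smul, aeval_trans2Numerator f hz, Algebra.smul_def]

theorem trans2_trans2 (h1 : f.eval 1 ≠ 0) : trans2 (trans2 f) = f.leadingCoeff⁻¹ • f := by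
  have hf0 : f ≠ 0 := by rintro rfl; simp at h1
  apply RatFunc.algebraMap_injective 𝕜
  rw [← RatFunc.aeval_X_left_eq_algebraMap, ← RatFunc.aeval_X_left_eq_algebraMap]
  set z : RatFunc 𝕜 := RatFunc.X
  have hz : z - 1 ≠ 0 := by
    simpa using (map_ne_zero_iff _ (RatFunc.algebraMap_injective 𝕜)).2 (X_sub_C_ne_zero (1 : 𝕜))
  have hw : z / (z - 1) - 1 ≠ 0 := by
    rw [div_sub_one_sub_one hz]; exact inv_ne_zero hz
  rw [aeval_trans2 _ hz, aeval_trans2 _ hw, (isMonicOfDegree_trans2 h1).natDegree_eq,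
    eval_one_trans2, div_sub_one_div_div_sub_one_sub_one hz, div_sub_one_sub_one hz, map_smul,
    Algebra.smul_def]
  have h1' : algebraMap 𝕜 (RatFunc 𝕜) (f.eval 1) ≠ 0 := by simpa using h1
  have hlc : algebraMap 𝕜 (RatFunc 𝕜) f.leadingCoeff ≠ 0 := by simpa using hf0
  simp only [map_inv₀, map_mul, inv_pow]
  field_simp

end Trans2

/-- For a monic polynomial `f` of degree `d` with `f(0) ≠ 0` and `f(1) ≠ 0`, the polynomial
`f^{(2)}` is monic of degree `d`, does not vanish at `0` or `1`, and `(f^{(2)})^{(2)} = f`. -/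
theorem trans2_involution
    (𝕜 : Type*) [Field 𝕜] (f : Polynomial 𝕜)
    (hf : f.Monic) (h0 : f.eval 0 ≠ 0) (h1 : f.eval 1 ≠ 0) :
    (trans2 f).Monic ∧ (trans2 f).natDegree = f.natDegree ∧
    (trans2 f).eval 0 ≠ 0 ∧ (trans2 f).eval 1 ≠ 0 ∧ trans2 (trans2 f) = f := by
  have hdeg := isMonicOfDegree_trans2 h1
  refine ⟨hdeg.monic, hdeg.natDegree_eq, ?_, ?_, ?_⟩
  · rw [eval_zero_trans2]
    exact mul_ne_zero (inv_ne_zero h1) (mul_ne_zero (pow_ne_zero _ (neg_ne_zero.2 one_ne_zero)) h0)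
  · rw [eval_one_trans2, hf.leadingCoeff, mul_one]
    exact inv_ne_zero h1
  · rw [trans2_trans2 h1, hf.leadingCoeff, inv_one, one_smul]
end
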